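/- arXiv:1806.10798 — 4 statements merged into one kernel-verified Lean document; each statement's English description precedes it below -/
import Mathlib

section
/- Let κ > 0 and n₀ ≤ k < k+1 ≤ n. There exists a constant K > 0 depending only on L_λ, K_ζ and B_g such that ∫_{t̃_k}^{t̃_{k+1}} e^{−κ(t̃_n − s)} ‖z̄(s) − z̄(t̃_k)‖ ds ≤ K (ε_k + ε_k ‖M^{(2)}_{k+1}‖ + ε_k b_k + ε_k b_k ‖M^{(2)}_{k+1}‖ + ε_k b_k ‖M^{(2)}_{k+1}‖²) · e^{−κ(t̃_n − t̃_{k+1})} a_k². -/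
set_option maxHeartbeats 1000000


open scoped BigOperators

/-- Lemma 3.1 of the paper: weighted-integral bound for the increments of the
interpolation `z̄` of `z_k = λ(y_k)`. -/
theorem zbar_weighted_integral_bound {d e : ℕ}
    (a b : ℕ → ℝ)
    (hab : ∀ k, 0 < b k ∧ b k ≤ a k ∧ a k < 1)
    (t : ℕ → ℝ) (ht0 : t 0 = 0) (htsucc : ∀ k, t (k + 1) = t k + a k)
    (h : EuclideanSpace ℝ (Fin d) → EuclideanSpace ℝ (Fin e) → EuclideanSpace ℝ (Fin d))
    (g : EuclideanSpace ℝ (Fin d) → EuclideanSpace ℝ (Fin e) → EuclideanSpace ℝ (Fin e))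
    (Lh Lg : NNReal)
    (hLip : LipschitzWith Lh fun p : EuclideanSpace ℝ (Fin d) × EuclideanSpace ℝ (Fin e) =>
      h p.1 p.2)
    (gLip : LipschitzWith Lg fun p : EuclideanSpace ℝ (Fin d) × EuclideanSpace ℝ (Fin e) =>
      g p.1 p.2)
    (Bg : ℝ) (hBg : ∀ x' y', ‖g x' y'‖ ≤ Bg)
    (lam : EuclideanSpace ℝ (Fin e) → EuclideanSpace ℝ (Fin d))
    (Dlam : EuclideanSpace ℝ (Fin e) →
      (EuclideanSpace ℝ (Fin e) →L[ℝ] EuclideanSpace ℝ (Fin d)))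
    (hlam : ∀ y', HasFDerivAt lam (Dlam y') y')
    (Llam : NNReal) (hlamLip : LipschitzWith Llam lam)
    (hDlam : ∀ y', ‖Dlam y'‖ ≤ (Llam : ℝ))
    (hlameq : ∀ y', h (lam y') y' = 0)
    (x : ℕ → EuclideanSpace ℝ (Fin d)) (y : ℕ → EuclideanSpace ℝ (Fin e))
    (M1 : ℕ → EuclideanSpace ℝ (Fin d)) (M2 : ℕ → EuclideanSpace ℝ (Fin e))
    (hx : ∀ k, x (k + 1) = x k + a k • (h (x k) (y k) + M1 (k + 1)))
    (hy : ∀ k, y (k + 1) = y k + b k • (g (x k) (y k) + M2 (k + 1)))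
    (z : ℕ → EuclideanSpace ℝ (Fin d)) (hz : ∀ k, z k = lam (y k))
    (zbar : ℝ → EuclideanSpace ℝ (Fin d))
    (hzbar : ∀ k, ∀ s ∈ Set.Icc (t k) (t (k + 1)),
      zbar s = z k + ((s - t k) / a k) • (z (k + 1) - z k))
    (Kζ : ℝ) (hKζ : 0 < Kζ)
    (hζb : ∀ k, ‖z (k + 1) - z k - Dlam (y k) (y (k + 1) - y k)‖ ≤ Kζ * ‖y (k + 1) - y k‖ ^ 2)
    (κ : ℝ) (hκ : 0 < κ) :
    ∃ K > (0 : ℝ), ∀ n₀ k n : ℕ, n₀ ≤ k → k + 1 ≤ n →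
      ∫ s in t k..t (k + 1), Real.exp (-κ * (t n - s)) * ‖zbar s - zbar (t k)‖ ≤
        K * (b k / a k + (b k / a k) * ‖M2 (k + 1)‖ + (b k / a k) * b k +
              (b k / a k) * b k * ‖M2 (k + 1)‖ + (b k / a k) * b k * ‖M2 (k + 1)‖ ^ 2) *
          Real.exp (-κ * (t n - t (k + 1))) * (a k) ^ 2 := by
  have hBg0 : 0 ≤ Bg := le_trans (norm_nonneg _) (hBg (x 0) (y 0))
  refine ⟨((Llam : ℝ) + 1) * (Bg + 1), by nlinarith [Llam.coe_nonneg], ?_⟩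
  intro n₀ k n hn₀ hkn
  obtain ⟨hbk, hba, ha1⟩ := hab k
  have hak : 0 < a k := lt_of_lt_of_le hbk hba
  have htk : t k ≤ t (k + 1) := by rw [htsucc]; linarith
  set m := ‖M2 (k + 1)‖ with hm
  have hm0 : 0 ≤ m := norm_nonneg _
  -- bound on the increment of y
  have hyinc : ‖y (k + 1) - y k‖ ≤ b k * (Bg + m) := by
    rw [hy k]
    have : y k + b k • (g (x k) (y k) + M2 (k + 1)) - y k
        = b k • (g (x k) (y k) + M2 (k + 1)) := by abel
    rw [this, norm_smul, Real.norm_eq_abs, abs_of_pos hbk]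
    have := norm_add_le (g (x k) (y k)) (M2 (k + 1))
    have := hBg (x k) (y k)
    nlinarith
  have hzinc : ‖z (k + 1) - z k‖ ≤ (Llam : ℝ) * (b k * (Bg + m)) := by
    rw [hz (k + 1), hz k]
    have h1 : ‖lam (y (k + 1)) - lam (y k)‖ ≤ (Llam : ℝ) * ‖y (k + 1) - y k‖ := by
      have := hlamLip.dist_le_mul (y (k + 1)) (y k)
      simpa [dist_eq_norm] using this
    calc ‖lam (y (k + 1)) - lam (y k)‖ ≤ (Llam : ℝ) * ‖y (k + 1) - y k‖ := h1
      _ ≤ (Llam : ℝ) * (b k * (Bg + m)) := by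
          exact mul_le_mul_of_nonneg_left hyinc (Llam.coe_nonneg)
  have hzbar_tk : zbar (t k) = z k := by
    have := hzbar k (t k) ⟨le_refl _, htk⟩
    simpa using this
  -- pointwise bound on the integrand on the interval
  set C : ℝ := Real.exp (-κ * (t n - t (k + 1))) * ((Llam : ℝ) * (b k * (Bg + m))) with hC
  have hbound : ∀ s ∈ Set.uIoc (t k) (t (k + 1)),
      ‖Real.exp (-κ * (t n - s)) * ‖zbar s - zbar (t k)‖‖ ≤ C := by
    intro s hs
    rw [Set.uIoc_of_le htk] at hs
    obtain ⟨hs1, hs2⟩ := hs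
    have hsIcc : s ∈ Set.Icc (t k) (t (k + 1)) := ⟨le_of_lt hs1, hs2⟩
    have hzb := hzbar k s hsIcc
    have hnorm : ‖zbar s - zbar (t k)‖ ≤ ‖z (k + 1) - z k‖ := by
      rw [hzb, hzbar_tk]
      have : z k + ((s - t k) / a k) • (z (k + 1) - z k) - z k
          = ((s - t k) / a k) • (z (k + 1) - z k) := by abel
      rw [this, norm_smul, Real.norm_eq_abs]
      have hfrac0 : 0 ≤ (s - t k) / a k := div_nonneg (by linarith) hak.le
      have hfrac1 : (s - t k) / a k ≤ 1 := by
        rw [div_le_one hak]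
        have := htsucc k
        linarith
      rw [abs_of_nonneg hfrac0]
      nlinarith [norm_nonneg (z (k + 1) - z k)]
    have hexp : Real.exp (-κ * (t n - s)) ≤ Real.exp (-κ * (t n - t (k + 1))) := by
      apply Real.exp_le_exp.mpr
      nlinarith
    rw [Real.norm_eq_abs, abs_of_nonneg (by positivity)]
    calc Real.exp (-κ * (t n - s)) * ‖zbar s - zbar (t k)‖
        ≤ Real.exp (-κ * (t n - t (k + 1))) * ((Llam : ℝ) * (b k * (Bg + m))) := by
          apply mul_le_mul hexp (le_trans hnorm hzinc) (norm_nonneg _) (Real.exp_pos _).le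
      _ = C := rfl
  have hint : (∫ s in t k..t (k + 1), Real.exp (-κ * (t n - s)) * ‖zbar s - zbar (t k)‖)
      ≤ C * a k := by
    have := intervalIntegral.norm_integral_le_of_norm_le_const hbound
    have habs : |t (k + 1) - t k| = a k := by
      rw [htsucc]; rw [abs_of_nonneg] <;> ring_nf <;> linarith
    rw [habs] at this
    calc (∫ s in t k..t (k + 1), Real.exp (-κ * (t n - s)) * ‖zbar s - zbar (t k)‖)
        ≤ ‖∫ s in t k..t (k + 1), Real.exp (-κ * (t n - s)) * ‖zbar s - zbar (t k)‖‖ :=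
          le_abs_self _
      _ ≤ C * a k := this
  refine le_trans hint ?_
  rw [hC]
  have hE : 0 < Real.exp (-κ * (t n - t (k + 1))) := Real.exp_pos _
  have hεa : (b k / a k) * a k ^ 2 = b k * a k := by field_simp
  have hL0 : (0 : ℝ) ≤ (Llam : ℝ) := Llam.coe_nonneg
  -- reduce to an algebraic inequality
  have key : (Llam : ℝ) * (b k * (Bg + m)) * a k ≤
      ((Llam : ℝ) + 1) * (Bg + 1) *
        (b k / a k + (b k / a k) * m + (b k / a k) * b k +
          (b k / a k) * b k * m + (b k / a k) * b k * m ^ 2) * a k ^ 2 := by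
    have h1 : (b k / a k) * a k ^ 2 = b k * a k := hεa
    have hε0 : 0 ≤ b k / a k := div_nonneg hbk.le hak.le
    have expand : ((Llam : ℝ) + 1) * (Bg + 1) *
        (b k / a k + (b k / a k) * m + (b k / a k) * b k +
          (b k / a k) * b k * m + (b k / a k) * b k * m ^ 2) * a k ^ 2
        = ((Llam : ℝ) + 1) * (Bg + 1) * (1 + m + b k + b k * m + b k * m ^ 2) * (b k * a k) := by
      rw [← h1]; ring
    rw [expand]
    have hba0 : 0 < b k * a k := mul_pos hbk hak
    have core : (Llam : ℝ) * (Bg + m) ≤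
        ((Llam : ℝ) + 1) * (Bg + 1) * (1 + m + b k + b k * m + b k * m ^ 2) := by
      nlinarith [mul_nonneg (mul_nonneg hL0 hBg0) hm0, mul_nonneg hBg0 hm0,
        mul_nonneg hbk.le hm0, mul_nonneg hbk.le (mul_nonneg hm0 hm0),
        mul_nonneg (mul_nonneg (add_nonneg hL0 zero_le_one) (add_nonneg hBg0 zero_le_one))
          (add_nonneg (add_nonneg (add_nonneg hbk.le (mul_nonneg hbk.le hm0))
            (mul_nonneg hbk.le (mul_nonneg hm0 hm0))) hm0)]
    calc (Llam : ℝ) * (b k * (Bg + m)) * a k = ((Llam : ℝ) * (Bg + m)) * (b k * a k) := by ring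
      _ ≤ ((Llam : ℝ) + 1) * (Bg + 1) * (1 + m + b k + b k * m + b k * m ^ 2) * (b k * a k) :=
          mul_le_mul_of_nonneg_right core hba0.le
  calc Real.exp (-κ * (t n - t (k + 1))) * ((Llam : ℝ) * (b k * (Bg + m))) * a k
      = ((Llam : ℝ) * (b k * (Bg + m)) * a k) * Real.exp (-κ * (t n - t (k + 1))) := by ring
    _ ≤ (((Llam : ℝ) + 1) * (Bg + 1) *
          (b k / a k + (b k / a k) * m + (b k / a k) * b k +
            (b k / a k) * b k * m + (b k / a k) * b k * m ^ 2) * a k ^ 2) *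
          Real.exp (-κ * (t n - t (k + 1))) := mul_le_mul_of_nonneg_right key hE.le
    _ = ((Llam : ℝ) + 1) * (Bg + 1) *
          (b k / a k + (b k / a k) * m + (b k / a k) * b k +
            (b k / a k) * b k * m + (b k / a k) * b k * m ^ 2) *
          Real.exp (-κ * (t n - t (k + 1))) * a k ^ 2 := by ring
end

section
/- Fix y ∈ ℝ^s and define A_n := Σ_{k=n₀}^{n−1} ∫_{t̃_k}^{t̃_{k+1}} Φ(t̃_n, s, z̄(s)) [h(z̄(t̃_k), y) − h(z̄(s), y)] ds. Then there exists a constant K > 0 depending only on K_Φ, κ, L_h, L_λ, K_ζ and B_g such that for every n ≥ n₀, ‖A_n‖ ≤ K [ sup_{n₀≤k≤n−1} b_k + sup_{n₀≤k≤n−1} b_k ‖M^{(2)}_{k+1}‖ + sup_{n₀≤k≤n−1} b_k² + sup_{n₀≤k≤n−1} b_k² ‖M^{(2)}_{k+1}‖ + sup_{n₀≤k≤n−1} b_k² ‖M^{(2)}_{k+1}‖² ]. -/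
open scoped BigOperators

private lemma bddAbove_cond (f : ℕ → ℝ) (s : Finset ℕ) :
    BddAbove (Set.range fun j => ⨆ _ : j ∈ s, f j) := by
  apply Set.Finite.bddAbove
  apply Set.Finite.subset (Set.Finite.insert (0:ℝ) (s.finite_toSet.image f))
  rintro _ ⟨j, rfl⟩
  show (⨆ _ : j ∈ s, f j) ∈ _
  by_cases hj : j ∈ s
  · rw [ciSup_pos hj]
    exact Set.mem_insert_iff.mpr (Or.inr ⟨j, hj, rfl⟩)
  · haveI : IsEmpty (j ∈ s) := ⟨hj⟩
    rw [Real.iSup_of_isEmpty]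
    exact Set.mem_insert _ _

private lemma le_biSup' (f : ℕ → ℝ) {s : Finset ℕ} {k : ℕ} (hk : k ∈ s) :
    f k ≤ ⨆ j ∈ s, f j := by
  have h := le_ciSup (bddAbove_cond f s) k
  rwa [ciSup_pos hk] at h

set_option maxHeartbeats 1000000 in
/-- Bound on the discretization-error term `A_n` of the Alekseev decomposition of `z̄`. -/
theorem An_bound {d e : ℕ}
    (a b : ℕ → ℝ)
    (hab : ∀ k, 0 < b k ∧ b k ≤ a k ∧ a k < 1)
    (t : ℕ → ℝ) (ht0 : t 0 = 0) (htsucc : ∀ k, t (k + 1) = t k + a k)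
    (h : EuclideanSpace ℝ (Fin d) → EuclideanSpace ℝ (Fin e) → EuclideanSpace ℝ (Fin d))
    (g : EuclideanSpace ℝ (Fin d) → EuclideanSpace ℝ (Fin e) → EuclideanSpace ℝ (Fin e))
    (Lh Lg : NNReal)
    (hLip : LipschitzWith Lh fun p : EuclideanSpace ℝ (Fin d) × EuclideanSpace ℝ (Fin e) =>
      h p.1 p.2)
    (gLip : LipschitzWith Lg fun p : EuclideanSpace ℝ (Fin d) × EuclideanSpace ℝ (Fin e) =>
      g p.1 p.2)
    (Bg : ℝ) (hBg : ∀ x' y', ‖g x' y'‖ ≤ Bg)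
    (lam : EuclideanSpace ℝ (Fin e) → EuclideanSpace ℝ (Fin d))
    (Dlam : EuclideanSpace ℝ (Fin e) →
      (EuclideanSpace ℝ (Fin e) →L[ℝ] EuclideanSpace ℝ (Fin d)))
    (hlam : ∀ y', HasFDerivAt lam (Dlam y') y')
    (Llam : NNReal) (hlamLip : LipschitzWith Llam lam)
    (hDlam : ∀ y', ‖Dlam y'‖ ≤ (Llam : ℝ))
    (hlameq : ∀ y', h (lam y') y' = 0)
    (x : ℕ → EuclideanSpace ℝ (Fin d)) (y : ℕ → EuclideanSpace ℝ (Fin e))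
    (M1 : ℕ → EuclideanSpace ℝ (Fin d)) (M2 : ℕ → EuclideanSpace ℝ (Fin e))
    (hx : ∀ k, x (k + 1) = x k + a k • (h (x k) (y k) + M1 (k + 1)))
    (hy : ∀ k, y (k + 1) = y k + b k • (g (x k) (y k) + M2 (k + 1)))
    (z : ℕ → EuclideanSpace ℝ (Fin d)) (hz : ∀ k, z k = lam (y k))
    (zbar : ℝ → EuclideanSpace ℝ (Fin d))
    (hzbar : ∀ k, ∀ s ∈ Set.Icc (t k) (t (k + 1)),
      zbar s = z k + ((s - t k) / a k) • (z (k + 1) - z k))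
    (Kζ : ℝ) (hKζ : 0 < Kζ)
    (hζb : ∀ k, ‖z (k + 1) - z k - Dlam (y k) (y (k + 1) - y k)‖ ≤ Kζ * ‖y (k + 1) - y k‖ ^ 2)
    (Φ : ℝ → ℝ → EuclideanSpace ℝ (Fin d) →
      (EuclideanSpace ℝ (Fin d) →L[ℝ] EuclideanSpace ℝ (Fin d)))
    (KΦ κ : ℝ) (hKΦ : 0 < KΦ) (hκ : 0 < κ)
    (hΦ : ∀ t' s w, s ≤ t' → ‖Φ t' s w‖ ≤ KΦ * Real.exp (-κ * (t' - s)))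
    (n₀ : ℕ)
    (Y : EuclideanSpace ℝ (Fin e)) :
    ∃ K > (0 : ℝ), ∀ n, n₀ ≤ n →
      ‖∑ k ∈ Finset.Ico n₀ n,
          ∫ s in t k..t (k + 1), Φ (t n) s (zbar s) (h (zbar (t k)) Y - h (zbar s) Y)‖ ≤
        K * ((⨆ k ∈ Finset.Ico n₀ n, b k) +
             (⨆ k ∈ Finset.Ico n₀ n, b k * ‖M2 (k + 1)‖) +
             (⨆ k ∈ Finset.Ico n₀ n, (b k) ^ 2) +
             (⨆ k ∈ Finset.Ico n₀ n, (b k) ^ 2 * ‖M2 (k + 1)‖) +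
             (⨆ k ∈ Finset.Ico n₀ n, (b k) ^ 2 * ‖M2 (k + 1)‖ ^ 2)) := by
  have hBg0 : 0 ≤ Bg := le_trans (norm_nonneg _) (hBg 0 0)
  have hapos : ∀ k, 0 < a k := fun k => lt_of_lt_of_le (hab k).1 (hab k).2.1
  have htm : Monotone t := monotone_nat_of_le_succ fun k => by
    rw [htsucc]; linarith [hapos k]
  have hek : 0 < Real.exp κ / κ := by positivity
  have hmax : (0:ℝ) < max Bg 1 := lt_of_lt_of_le zero_lt_one (le_max_right _ _)
  set C0 : ℝ := KΦ * (Lh : ℝ) * (Llam : ℝ) * (Real.exp κ / κ) * max Bg 1 + 1 with hC0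
  have hC0pos : 0 < C0 := by
    have h1 : (0:ℝ) ≤ KΦ * (Lh : ℝ) * (Llam : ℝ) * (Real.exp κ / κ) * max Bg 1 := by
      have := Lh.coe_nonneg; have := Llam.coe_nonneg; positivity
    simp only [hC0]; linarith
  refine ⟨C0, hC0pos, ?_⟩
  intro n hn
  rcases eq_or_lt_of_le hn with rfl | hlt
  · have he : ∀ f : ℕ → ℝ, (⨆ j ∈ Finset.Ico n₀ n₀, f j) = 0 := by
      intro f
      have h1 : ∀ j, (⨆ _ : j ∈ Finset.Ico n₀ n₀, f j) = (0:ℝ) := fun j => by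
        haveI : IsEmpty (j ∈ Finset.Ico n₀ n₀) := ⟨fun hj => by simp at hj⟩
        exact Real.iSup_of_isEmpty _
      simp only [h1, ciSup_const]
    simp [Finset.Ico_self, he]
  -- main case
  have hmem : n₀ ∈ Finset.Ico n₀ n := Finset.mem_Ico.mpr ⟨le_rfl, hlt⟩
  set S1 := ⨆ k ∈ Finset.Ico n₀ n, b k with hS1def
  set S2 := ⨆ k ∈ Finset.Ico n₀ n, b k * ‖M2 (k + 1)‖ with hS2def
  set S3 := ⨆ k ∈ Finset.Ico n₀ n, (b k) ^ 2 with hS3def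
  set S4 := ⨆ k ∈ Finset.Ico n₀ n, (b k) ^ 2 * ‖M2 (k + 1)‖ with hS4def
  set S5 := ⨆ k ∈ Finset.Ico n₀ n, (b k) ^ 2 * ‖M2 (k + 1)‖ ^ 2 with hS5def
  have hS1 : 0 ≤ S1 := by
    rw [hS1def]; exact le_trans (hab n₀).1.le (le_biSup' b hmem)
  have hS2 : 0 ≤ S2 := by
    rw [hS2def]
    exact le_trans (mul_nonneg (hab n₀).1.le (norm_nonneg (M2 (n₀ + 1))))
      (le_biSup' (fun k => b k * ‖M2 (k + 1)‖) hmem)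
  have hS3 : 0 ≤ S3 := by
    rw [hS3def]; exact le_trans (sq_nonneg (b n₀)) (le_biSup' (fun k => (b k) ^ 2) hmem)
  have hS4 : 0 ≤ S4 := by
    rw [hS4def]
    exact le_trans (mul_nonneg (sq_nonneg (b n₀)) (norm_nonneg (M2 (n₀ + 1))))
      (le_biSup' (fun k => (b k) ^ 2 * ‖M2 (k + 1)‖) hmem)
  have hS5 : 0 ≤ S5 := by
    rw [hS5def]
    exact le_trans (mul_nonneg (sq_nonneg (b n₀)) (sq_nonneg ‖M2 (n₀ + 1)‖))
      (le_biSup' (fun k => (b k) ^ 2 * ‖M2 (k + 1)‖ ^ 2) hmem)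
  -- Lipschitz bound for h in its first argument
  have hLiph : ∀ p q : EuclideanSpace ℝ (Fin d), ‖h p Y - h q Y‖ ≤ (Lh:ℝ) * ‖p - q‖ := by
    intro p q
    have h1 := hLip.dist_le_mul (p, Y) (q, Y)
    rw [Prod.dist_eq] at h1
    simp only [dist_self, dist_eq_norm] at h1
    simpa [max_eq_left (norm_nonneg (p - q))] using h1
  -- increment bound for z
  have hzd : ∀ k, ‖z (k + 1) - z k‖ ≤ (Llam:ℝ) * (b k * (Bg + ‖M2 (k + 1)‖)) := by
    intro k
    have h1 := hlamLip.dist_le_mul (y (k + 1)) (y k)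
    rw [dist_eq_norm, dist_eq_norm] at h1
    have h2 : y (k + 1) - y k = b k • (g (x k) (y k) + M2 (k + 1)) := by
      rw [hy k]; abel
    have h3 : ‖y (k + 1) - y k‖ ≤ b k * (Bg + ‖M2 (k + 1)‖) := by
      rw [h2, norm_smul, Real.norm_eq_abs, abs_of_pos (hab k).1]
      have h4 := norm_add_le (g (x k) (y k)) (M2 (k + 1))
      have h5 := hBg (x k) (y k)
      nlinarith [(hab k).1]
    rw [hz (k + 1), hz k]
    exact le_trans h1 (mul_le_mul_of_nonneg_left h3 Llam.coe_nonneg)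
  have hzb0 : ∀ k, zbar (t k) = z k := by
    intro k
    have h1 := hzbar k (t k) ⟨le_rfl, by rw [htsucc]; linarith [hapos k]⟩
    simpa using h1
  -- per-interval bound
  have key : ∀ k ∈ Finset.Ico n₀ n,
      ‖∫ s in t k..t (k + 1), Φ (t n) s (zbar s) (h (zbar (t k)) Y - h (zbar s) Y)‖ ≤
        (KΦ * ((Lh:ℝ) * ((Llam:ℝ) * (Bg * S1 + S2)))) *
          (a k * Real.exp (-κ * (t n - t (k + 1)))) := by
    intro k hk
    have hkn : k + 1 ≤ n := (Finset.mem_Ico.mp hk).2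
    have htkn : t (k + 1) ≤ t n := htm hkn
    have htk : t k ≤ t (k + 1) := by rw [htsucc]; linarith [hapos k]
    have hbound : ∀ s ∈ Set.uIoc (t k) (t (k + 1)),
        ‖Φ (t n) s (zbar s) (h (zbar (t k)) Y - h (zbar s) Y)‖ ≤
          KΦ * Real.exp (-κ * (t n - t (k + 1))) * ((Lh:ℝ) * ‖z (k + 1) - z k‖) := by
      intro s hs
      rw [Set.uIoc_of_le htk] at hs
      obtain ⟨hs1, hs2⟩ := hs
      have hsn : s ≤ t n := le_trans hs2 htkn
      have hzbs : zbar s = z k + ((s - t k) / a k) • (z (k + 1) - z k) :=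
        hzbar k s ⟨hs1.le, hs2⟩
      have hr0 : 0 ≤ (s - t k) / a k := div_nonneg (by linarith) (hapos k).le
      have hr1 : (s - t k) / a k ≤ 1 := by
        rw [div_le_one (hapos k)]
        have := htsucc k; linarith
      have hdiff : ‖zbar (t k) - zbar s‖ ≤ ‖z (k + 1) - z k‖ := by
        rw [hzb0 k, hzbs]
        have heq : z k - (z k + ((s - t k) / a k) • (z (k + 1) - z k)) =
            -(((s - t k) / a k) • (z (k + 1) - z k)) := by abel
        rw [heq, norm_neg, norm_smul, Real.norm_eq_abs, abs_of_nonneg hr0]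
        nlinarith [norm_nonneg (z (k + 1) - z k)]
      have h1 : ‖h (zbar (t k)) Y - h (zbar s) Y‖ ≤ (Lh:ℝ) * ‖z (k + 1) - z k‖ :=
        le_trans (hLiph _ _) (mul_le_mul_of_nonneg_left hdiff Lh.coe_nonneg)
      have h2 : ‖Φ (t n) s (zbar s)‖ ≤ KΦ * Real.exp (-κ * (t n - t (k + 1))) := by
        refine le_trans (hΦ (t n) s (zbar s) hsn) ?_
        have hmono : Real.exp (-κ * (t n - s)) ≤ Real.exp (-κ * (t n - t (k + 1))) := by
          apply Real.exp_le_exp.mpr; nlinarith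
        nlinarith [Real.exp_pos (-κ * (t n - s))]
      calc ‖Φ (t n) s (zbar s) (h (zbar (t k)) Y - h (zbar s) Y)‖
          ≤ ‖Φ (t n) s (zbar s)‖ * ‖h (zbar (t k)) Y - h (zbar s) Y‖ :=
            (Φ (t n) s (zbar s)).le_opNorm _
        _ ≤ _ := by
            apply mul_le_mul h2 h1 (norm_nonneg _)
            positivity
    have hI := intervalIntegral.norm_integral_le_of_norm_le_const hbound
    have hat : |t (k + 1) - t k| = a k := by
      rw [htsucc, add_sub_cancel_left, abs_of_pos (hapos k)]
    rw [hat] at hI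
    have hb1 : b k ≤ S1 := by rw [hS1def]; exact le_biSup' b hk
    have hb2 : b k * ‖M2 (k + 1)‖ ≤ S2 := by
      rw [hS2def]; exact le_biSup' (fun k => b k * ‖M2 (k + 1)‖) hk
    have h' : ‖z (k + 1) - z k‖ ≤ (Llam:ℝ) * (Bg * S1 + S2) := by
      refine le_trans (hzd k) ?_
      apply mul_le_mul_of_nonneg_left _ Llam.coe_nonneg
      have h6 := mul_le_mul_of_nonneg_left hb1 hBg0
      nlinarith
    calc ‖∫ s in t k..t (k + 1), Φ (t n) s (zbar s) (h (zbar (t k)) Y - h (zbar s) Y)‖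
        ≤ KΦ * Real.exp (-κ * (t n - t (k + 1))) * ((Lh:ℝ) * ‖z (k + 1) - z k‖) * a k := hI
      _ ≤ KΦ * Real.exp (-κ * (t n - t (k + 1))) * ((Lh:ℝ) * ((Llam:ℝ) * (Bg * S1 + S2))) * a k := by
          have h7 := mul_le_mul_of_nonneg_left h' Lh.coe_nonneg
          have h8 : (0:ℝ) ≤ KΦ * Real.exp (-κ * (t n - t (k + 1))) := by positivity
          nlinarith [hapos k, mul_le_mul_of_nonneg_left h7 h8]
      _ = (KΦ * ((Lh:ℝ) * ((Llam:ℝ) * (Bg * S1 + S2)))) *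
            (a k * Real.exp (-κ * (t n - t (k + 1)))) := by ring
  -- telescoping exponential sum
  have tele : ∑ k ∈ Finset.Ico n₀ n, a k * Real.exp (-κ * (t n - t (k + 1))) ≤
      Real.exp κ / κ := by
    have per : ∀ k ∈ Finset.Ico n₀ n, a k * Real.exp (-κ * (t n - t (k + 1))) ≤
        (Real.exp κ / κ) *
          (Real.exp (-κ * (t n - t (k + 1))) - Real.exp (-κ * (t n - t k))) := by
      intro k hk
      have hE : Real.exp (-κ * (t n - t (k + 1))) =
          Real.exp (κ * a k) * Real.exp (-κ * (t n - t k)) := by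
        rw [← Real.exp_add]; congr 1; rw [htsucc]; ring
      have h1 : κ * a k + 1 ≤ Real.exp (κ * a k) := Real.add_one_le_exp _
      have h2 : Real.exp (κ * a k) ≤ Real.exp κ :=
        Real.exp_le_exp.mpr (by nlinarith [hapos k, (hab k).2.2])
      have hF : 0 < Real.exp (-κ * (t n - t k)) := Real.exp_pos _
      rw [hE, div_mul_eq_mul_div, le_div_iff₀ hκ]
      have h3 : κ * a k * Real.exp (-κ * (t n - t k)) ≤
          Real.exp (κ * a k) * Real.exp (-κ * (t n - t k)) - Real.exp (-κ * (t n - t k)) := by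
        nlinarith [mul_le_mul_of_nonneg_right (show κ * a k ≤ Real.exp (κ * a k) - 1 by linarith)
          hF.le]
      have h4 := mul_le_mul_of_nonneg_right h2
        (show (0:ℝ) ≤ a k * Real.exp (-κ * (t n - t k)) * κ from
          mul_nonneg (mul_nonneg (hapos k).le hF.le) hκ.le)
      have h5 := mul_le_mul_of_nonneg_left h3 (Real.exp_pos κ).le
      nlinarith [h4, h5]
    calc ∑ k ∈ Finset.Ico n₀ n, a k * Real.exp (-κ * (t n - t (k + 1)))
        ≤ ∑ k ∈ Finset.Ico n₀ n, (Real.exp κ / κ) *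
            (Real.exp (-κ * (t n - t (k + 1))) - Real.exp (-κ * (t n - t k))) :=
          Finset.sum_le_sum per
      _ = (Real.exp κ / κ) * ∑ k ∈ Finset.Ico n₀ n,
            ((fun j => Real.exp (-κ * (t n - t j))) (k + 1) -
              (fun j => Real.exp (-κ * (t n - t j))) k) := by
          rw [Finset.mul_sum]
      _ = (Real.exp κ / κ) *
            (Real.exp (-κ * (t n - t n)) - Real.exp (-κ * (t n - t n₀))) := by
          rw [Finset.sum_Ico_eq_sub _ hn,
            Finset.sum_range_sub (fun j => Real.exp (-κ * (t n - t j))) n,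
            Finset.sum_range_sub (fun j => Real.exp (-κ * (t n - t j))) n₀]
          beta_reduce
          ring
      _ ≤ Real.exp κ / κ := by
          have h1 : Real.exp (-κ * (t n - t n)) = 1 := by simp
          have h2 : 0 < Real.exp (-κ * (t n - t n₀)) := Real.exp_pos _
          nlinarith [hek]
  -- assemble
  have hSsum : 0 ≤ S1 + S2 + S3 + S4 + S5 := by linarith
  have hcoef : (0:ℝ) ≤ KΦ * ((Lh:ℝ) * ((Llam:ℝ) * (Bg * S1 + S2))) := by
    have := Lh.coe_nonneg; have := Llam.coe_nonneg
    have h9 : 0 ≤ Bg * S1 + S2 := by nlinarith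
    positivity
  calc ‖∑ k ∈ Finset.Ico n₀ n,
          ∫ s in t k..t (k + 1), Φ (t n) s (zbar s) (h (zbar (t k)) Y - h (zbar s) Y)‖
      ≤ ∑ k ∈ Finset.Ico n₀ n,
          ‖∫ s in t k..t (k + 1), Φ (t n) s (zbar s) (h (zbar (t k)) Y - h (zbar s) Y)‖ :=
        norm_sum_le _ _
    _ ≤ ∑ k ∈ Finset.Ico n₀ n, (KΦ * ((Lh:ℝ) * ((Llam:ℝ) * (Bg * S1 + S2)))) *
          (a k * Real.exp (-κ * (t n - t (k + 1)))) := Finset.sum_le_sum key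
    _ = (KΦ * ((Lh:ℝ) * ((Llam:ℝ) * (Bg * S1 + S2)))) *
          ∑ k ∈ Finset.Ico n₀ n, a k * Real.exp (-κ * (t n - t (k + 1))) := by
        rw [Finset.mul_sum]
    _ ≤ (KΦ * ((Lh:ℝ) * ((Llam:ℝ) * (Bg * S1 + S2)))) * (Real.exp κ / κ) :=
        mul_le_mul_of_nonneg_left tele hcoef
    _ ≤ C0 * (S1 + S2 + S3 + S4 + S5) := by
        have hstep : Bg * S1 + S2 ≤ max Bg 1 * (S1 + S2 + S3 + S4 + S5) := by
          have h1 : Bg ≤ max Bg 1 := le_max_left _ _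
          have h2 : (1:ℝ) ≤ max Bg 1 := le_max_right _ _
          nlinarith
        have hcoefB : (0:ℝ) ≤ KΦ * (Lh:ℝ) * (Llam:ℝ) * (Real.exp κ / κ) := by
          have := Lh.coe_nonneg; have := Llam.coe_nonneg; positivity
        have hA := mul_le_mul_of_nonneg_left hstep hcoefB
        have hB : (KΦ * (Lh:ℝ) * (Llam:ℝ) * (Real.exp κ / κ) * max Bg 1) *
            (S1 + S2 + S3 + S4 + S5) ≤ C0 * (S1 + S2 + S3 + S4 + S5) := by
          apply mul_le_mul_of_nonneg_right _ hSsum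
          simp only [hC0]; linarith
        nlinarith [hA, hB]
end

section
/- Define ε̂_{k+1} := ζ_{k+1}/a_k and D_n := Σ_{k=n₀}^{n−1} ∫_{t̃_k}^{t̃_{k+1}} Φ(t̃_n, s, z̄(s)) ε̂_{k+1} ds. Then there exists a constant K > 0 depending only on K_Φ, κ, K_ζ and B_g such that for every n ≥ n₀, ‖D_n‖ ≤ K [ sup_{n₀≤k≤n−1} ε_k b_k + sup_{n₀≤k≤n−1} ε_k b_k ‖M^{(2)}_{k+1}‖ + sup_{n₀≤k≤n−1} ε_k b_k ‖M^{(2)}_{k+1}‖² ]. -/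
open scoped BigOperators

lemma mySup_aux (s : Finset ℕ) (f : ℕ → ℝ) (hf : ∀ k, 0 ≤ f k) :
    0 ≤ (⨆ k ∈ s, f k) ∧ ∀ k ∈ s, f k ≤ ⨆ k ∈ s, f k := by
  have hval : ∀ k, (⨆ _ : k ∈ s, f k) = if k ∈ s then f k else 0 := by
    intro k
    by_cases hk : k ∈ s
    · rw [ciSup_pos hk, if_pos hk]
    · rw [if_neg hk]
      have : IsEmpty (k ∈ s) := ⟨hk⟩
      exact Real.iSup_of_isEmpty _
  have hrange : Set.range (fun k => ⨆ _ : k ∈ s, f k) ⊆ ↑(insert (0:ℝ) (s.image f)) := by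
    rintro v ⟨k, rfl⟩
    dsimp only
    rw [hval]
    by_cases hk : k ∈ s
    · simp only [if_pos hk, Finset.coe_insert, Set.mem_insert_iff, Finset.mem_coe,
        Finset.mem_image]
      exact Or.inr ⟨k, hk, rfl⟩
    · simp [if_neg hk]
  have hbdd : BddAbove (Set.range (fun k => ⨆ _ : k ∈ s, f k)) :=
    BddAbove.mono hrange (Finset.bddAbove _)
  constructor
  · exact Real.iSup_nonneg fun k => Real.iSup_nonneg fun _ => hf k
  · intro k hk
    have h1 : f k = ⨆ _ : k ∈ s, f k := by rw [hval, if_pos hk]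
    rw [h1]
    exact le_ciSup hbdd k

set_option maxHeartbeats 1000000 in
/-- Bound on the Taylor-remainder term `D_n` (with `ε̂_{k+1} = ζ_{k+1}/a_k`) of the
Alekseev decomposition of `z̄`. -/
theorem Dn_bound {d e : ℕ}
    (a b : ℕ → ℝ)
    (hab : ∀ k, 0 < b k ∧ b k ≤ a k ∧ a k < 1)
    (t : ℕ → ℝ) (ht0 : t 0 = 0) (htsucc : ∀ k, t (k + 1) = t k + a k)
    (h : EuclideanSpace ℝ (Fin d) → EuclideanSpace ℝ (Fin e) → EuclideanSpace ℝ (Fin d))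
    (g : EuclideanSpace ℝ (Fin d) → EuclideanSpace ℝ (Fin e) → EuclideanSpace ℝ (Fin e))
    (Lh Lg : NNReal)
    (hLip : LipschitzWith Lh fun p : EuclideanSpace ℝ (Fin d) × EuclideanSpace ℝ (Fin e) =>
      h p.1 p.2)
    (gLip : LipschitzWith Lg fun p : EuclideanSpace ℝ (Fin d) × EuclideanSpace ℝ (Fin e) =>
      g p.1 p.2)
    (Bg : ℝ) (hBg : ∀ x' y', ‖g x' y'‖ ≤ Bg)
    (lam : EuclideanSpace ℝ (Fin e) → EuclideanSpace ℝ (Fin d))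
    (Dlam : EuclideanSpace ℝ (Fin e) →
      (EuclideanSpace ℝ (Fin e) →L[ℝ] EuclideanSpace ℝ (Fin d)))
    (hlam : ∀ y', HasFDerivAt lam (Dlam y') y')
    (Llam : NNReal) (hlamLip : LipschitzWith Llam lam)
    (hDlam : ∀ y', ‖Dlam y'‖ ≤ (Llam : ℝ))
    (hlameq : ∀ y', h (lam y') y' = 0)
    (x : ℕ → EuclideanSpace ℝ (Fin d)) (y : ℕ → EuclideanSpace ℝ (Fin e))
    (M1 : ℕ → EuclideanSpace ℝ (Fin d)) (M2 : ℕ → EuclideanSpace ℝ (Fin e))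
    (hx : ∀ k, x (k + 1) = x k + a k • (h (x k) (y k) + M1 (k + 1)))
    (hy : ∀ k, y (k + 1) = y k + b k • (g (x k) (y k) + M2 (k + 1)))
    (z : ℕ → EuclideanSpace ℝ (Fin d)) (hz : ∀ k, z k = lam (y k))
    (zbar : ℝ → EuclideanSpace ℝ (Fin d))
    (hzbar : ∀ k, ∀ s ∈ Set.Icc (t k) (t (k + 1)),
      zbar s = z k + ((s - t k) / a k) • (z (k + 1) - z k))
    (ζ : ℕ → EuclideanSpace ℝ (Fin d))
    (hζdef : ∀ k, ζ (k + 1) = z (k + 1) - z k - Dlam (y k) (y (k + 1) - y k))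
    (Kζ : ℝ) (hKζ : 0 < Kζ)
    (hζb : ∀ k, ‖ζ (k + 1)‖ ≤ Kζ * ‖y (k + 1) - y k‖ ^ 2)
    (Φ : ℝ → ℝ → EuclideanSpace ℝ (Fin d) →
      (EuclideanSpace ℝ (Fin d) →L[ℝ] EuclideanSpace ℝ (Fin d)))
    (KΦ κ : ℝ) (hKΦ : 0 < KΦ) (hκ : 0 < κ)
    (hΦ : ∀ t' s w, s ≤ t' → ‖Φ t' s w‖ ≤ KΦ * Real.exp (-κ * (t' - s)))
    (n₀ : ℕ)
    :
    ∃ K > (0 : ℝ), ∀ n, n₀ ≤ n →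
      ‖∑ k ∈ Finset.Ico n₀ n,
          ∫ s in t k..t (k + 1), Φ (t n) s (zbar s) ((a k)⁻¹ • ζ (k + 1))‖ ≤
        K * ((⨆ k ∈ Finset.Ico n₀ n, (b k / a k) * b k) +
             (⨆ k ∈ Finset.Ico n₀ n, (b k / a k) * b k * ‖M2 (k + 1)‖) +
             (⨆ k ∈ Finset.Ico n₀ n, (b k / a k) * b k * ‖M2 (k + 1)‖ ^ 2)) := by
  have hb : ∀ k, 0 < b k := fun k => (hab k).1
  have ha : ∀ k, 0 < a k := fun k => lt_of_lt_of_le (hb k) (hab k).2.1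
  have ha1 : ∀ k, a k < 1 := fun k => (hab k).2.2
  have hBg0 : 0 ≤ Bg := le_trans (norm_nonneg _) (hBg 0 0)
  have htmono : ∀ m n : ℕ, m ≤ n → t m ≤ t n := by
    intro m n hmn
    induction n with
    | zero =>
      have : m = 0 := Nat.le_zero.mp hmn
      simp [this]
    | succ n ih =>
      rcases Nat.lt_or_ge m (n + 1) with hlt | hge
      · have h1 := ih (Nat.lt_succ_iff.mp hlt)
        have h2 := (ha n).le
        rw [htsucc]; linarith
      · have : m = n + 1 := le_antisymm hmn hge
        simp [this]
  have hP : 0 < KΦ * Kζ * Real.exp κ / κ :=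
    div_pos (mul_pos (mul_pos hKΦ hKζ) (Real.exp_pos κ)) hκ
  refine ⟨KΦ * Kζ * Real.exp κ / κ * (2 * Bg ^ 2 + 2), by positivity, ?_⟩
  intro n hn
  set S1 : ℝ := ⨆ k ∈ Finset.Ico n₀ n, (b k / a k) * b k with hS1def
  set S2 : ℝ := ⨆ k ∈ Finset.Ico n₀ n, (b k / a k) * b k * ‖M2 (k + 1)‖ with hS2def
  set S3 : ℝ := ⨆ k ∈ Finset.Ico n₀ n, (b k / a k) * b k * ‖M2 (k + 1)‖ ^ 2 with hS3def
  have hf1 : ∀ k, 0 ≤ (b k / a k) * b k := fun k =>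
    mul_nonneg (div_nonneg (hb k).le (ha k).le) (hb k).le
  have haux1 := mySup_aux (Finset.Ico n₀ n) (fun k => (b k / a k) * b k) hf1
  have haux2 := mySup_aux (Finset.Ico n₀ n) (fun k => (b k / a k) * b k * ‖M2 (k + 1)‖)
    (fun k => mul_nonneg (hf1 k) (norm_nonneg _))
  have haux3 := mySup_aux (Finset.Ico n₀ n) (fun k => (b k / a k) * b k * ‖M2 (k + 1)‖ ^ 2)
    (fun k => mul_nonneg (hf1 k) (sq_nonneg _))
  have hS1n : 0 ≤ S1 := haux1.1
  have hS2n : 0 ≤ S2 := haux2.1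
  have hS3n : 0 ≤ S3 := haux3.1
  set A : ℝ := 2 * Bg ^ 2 * S1 + 2 * S3 with hAdef
  have hAn : 0 ≤ A := by positivity
  set u : ℕ → ℝ := fun j => Real.exp (-κ * (t n - t j)) with hudef
  set C : ℝ := KΦ * Kζ * A * (Real.exp κ / κ) with hCdef
  have hCn : 0 ≤ C := by
    have := (Real.exp_pos κ).le
    have h2 : 0 ≤ Real.exp κ / κ := div_nonneg this hκ.le
    positivity
  -- the step inequality
  have hstep : ∀ k, k + 1 ≤ n → a k * u (k + 1) ≤ Real.exp κ / κ * (u (k + 1) - u k) := by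
    intro k hk1
    have hx0 : 0 < κ * a k := mul_pos hκ (ha k)
    have hxκ : κ * a k ≤ κ := by nlinarith [(ha1 k), hκ]
    have he1 : κ * a k + 1 ≤ Real.exp (κ * a k) := Real.add_one_le_exp _
    have he2 : Real.exp (κ * a k) ≤ Real.exp κ := Real.exp_le_exp.mpr hxκ
    have huk : 0 < u k := Real.exp_pos _
    have hrew : u (k + 1) = u k * Real.exp (κ * a k) := by
      simp only [hudef]
      rw [← Real.exp_add]
      congr 1
      rw [htsucc]; ring
    rw [hrew, div_mul_eq_mul_div, le_div_iff₀ hκ]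
    have hkey : (κ * a k) * Real.exp (κ * a k) ≤ (Real.exp (κ * a k) - 1) * Real.exp κ := by
      nlinarith [Real.exp_pos (κ * a k), Real.exp_pos κ]
    nlinarith [mul_le_mul_of_nonneg_right hkey huk.le]
  -- per-term bound
  have hterm : ∀ k ∈ Finset.Ico n₀ n,
      ‖∫ s in t k..t (k + 1), Φ (t n) s (zbar s) ((a k)⁻¹ • ζ (k + 1))‖ ≤
        C * (u (k + 1) - u k) := by
    intro k hk
    have hk1 : k + 1 ≤ n := (Finset.mem_Ico.mp hk).2
    have htk : t (k + 1) ≤ t n := htmono _ _ hk1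
    have htkk : t k ≤ t (k + 1) := by rw [htsucc]; linarith [(ha k).le]
    have hnormy : ‖y (k + 1) - y k‖ ≤ b k * (Bg + ‖M2 (k + 1)‖) := by
      rw [hy k]
      rw [add_sub_cancel_left, norm_smul, Real.norm_eq_abs, abs_of_pos (hb k)]
      have h1 := norm_add_le (g (x k) (y k)) (M2 (k + 1))
      have h2 := hBg (x k) (y k)
      have h3 := (hb k).le
      nlinarith
    have hζ2 : ‖ζ (k + 1)‖ ≤ Kζ * (b k * (Bg + ‖M2 (k + 1)‖)) ^ 2 :=
      le_trans (hζb k)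
        (mul_le_mul_of_nonneg_left (pow_le_pow_left₀ (norm_nonneg _) hnormy 2) hKζ.le)
    have hS1k : (b k / a k) * b k ≤ S1 := haux1.2 k hk
    have hS3k : (b k / a k) * b k * ‖M2 (k + 1)‖ ^ 2 ≤ S3 := haux3.2 k hk
    have hane : a k ≠ 0 := (ha k).ne'
    have hba : (b k / a k) * b k * a k = b k ^ 2 := by
      field_simp
    have h1 : b k ^ 2 ≤ a k * S1 := by
      nlinarith [mul_le_mul_of_nonneg_right hS1k (ha k).le]
    have h2 : b k ^ 2 * ‖M2 (k + 1)‖ ^ 2 ≤ a k * S3 := by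
      nlinarith [mul_le_mul_of_nonneg_right hS3k (ha k).le]
    have hζA : ‖ζ (k + 1)‖ ≤ a k * (Kζ * A) := by
      have hbound : (b k * (Bg + ‖M2 (k + 1)‖)) ^ 2 ≤ a k * A := by
        rw [hAdef]
        nlinarith [sq_nonneg (b k * (Bg - ‖M2 (k + 1)‖)), sq_nonneg Bg,
          norm_nonneg (M2 (k + 1))]
      nlinarith [mul_le_mul_of_nonneg_left hbound hKζ.le]
    have hnv : ‖(a k)⁻¹ • ζ (k + 1)‖ ≤ Kζ * A := by
      rw [norm_smul, Real.norm_eq_abs, abs_of_pos (inv_pos.mpr (ha k)),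
        inv_mul_le_iff₀ (ha k)]
      exact hζA
    set E : ℝ := Real.exp (-κ * (t n - t (k + 1))) with hEdef
    have hE0 : 0 ≤ E := (Real.exp_pos _).le
    have hC1 : ∀ s' ∈ Set.uIoc (t k) (t (k + 1)),
        ‖Φ (t n) s' (zbar s') ((a k)⁻¹ • ζ (k + 1))‖ ≤ KΦ * E * ‖(a k)⁻¹ • ζ (k + 1)‖ := by
      intro s' hs'
      rw [Set.uIoc_of_le htkk] at hs'
      have hs2 : s' ≤ t (k + 1) := hs'.2
      have hsn : s' ≤ t n := le_trans hs2 htk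
      calc ‖Φ (t n) s' (zbar s') ((a k)⁻¹ • ζ (k + 1))‖
          ≤ ‖Φ (t n) s' (zbar s')‖ * ‖(a k)⁻¹ • ζ (k + 1)‖ :=
            ContinuousLinearMap.le_opNorm _ _
        _ ≤ (KΦ * Real.exp (-κ * (t n - s'))) * ‖(a k)⁻¹ • ζ (k + 1)‖ :=
            mul_le_mul_of_nonneg_right (hΦ _ _ _ hsn) (norm_nonneg _)
        _ ≤ KΦ * E * ‖(a k)⁻¹ • ζ (k + 1)‖ := by
            have hmon : Real.exp (-κ * (t n - s')) ≤ E := by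
              rw [hEdef]
              apply Real.exp_le_exp.mpr
              nlinarith
            have := mul_le_mul_of_nonneg_left hmon hKΦ.le
            exact mul_le_mul_of_nonneg_right this (norm_nonneg _)
    have hint := intervalIntegral.norm_integral_le_of_norm_le_const hC1
    have habs : |t (k + 1) - t k| = a k := by
      rw [htsucc]
      rw [show t k + a k - t k = a k by ring]
      exact abs_of_pos (ha k)
    rw [habs] at hint
    calc ‖∫ s in t k..t (k + 1), Φ (t n) s (zbar s) ((a k)⁻¹ • ζ (k + 1))‖
        ≤ KΦ * E * ‖(a k)⁻¹ • ζ (k + 1)‖ * a k := hint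
      _ ≤ KΦ * E * (Kζ * A) * a k := by
          have h4 := mul_le_mul_of_nonneg_left hnv (mul_nonneg hKΦ.le hE0)
          exact mul_le_mul_of_nonneg_right h4 (ha k).le
      _ = (KΦ * (Kζ * A)) * (a k * E) := by ring
      _ ≤ (KΦ * (Kζ * A)) * (Real.exp κ / κ * (u (k + 1) - u k)) := by
          apply mul_le_mul_of_nonneg_left (hstep k hk1)
          have : 0 ≤ Kζ * A := mul_nonneg hKζ.le hAn
          positivity
      _ = C * (u (k + 1) - u k) := by rw [hCdef]; ring
  have htel : ∑ k ∈ Finset.Ico n₀ n, (u (k + 1) - u k) = u n - u n₀ := by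
    rw [Finset.sum_Ico_eq_sub _ hn, Finset.sum_range_sub u, Finset.sum_range_sub u]
    ring
  have hun : u n = 1 := by
    simp only [hudef]
    rw [show -κ * (t n - t n) = 0 by ring, Real.exp_zero]
  have hun0 : 0 < u n₀ := Real.exp_pos _
  calc ‖∑ k ∈ Finset.Ico n₀ n,
          ∫ s in t k..t (k + 1), Φ (t n) s (zbar s) ((a k)⁻¹ • ζ (k + 1))‖
      ≤ ∑ k ∈ Finset.Ico n₀ n,
          ‖∫ s in t k..t (k + 1), Φ (t n) s (zbar s) ((a k)⁻¹ • ζ (k + 1))‖ :=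
        norm_sum_le _ _
    _ ≤ ∑ k ∈ Finset.Ico n₀ n, C * (u (k + 1) - u k) := Finset.sum_le_sum hterm
    _ = C * (u n - u n₀) := by rw [← Finset.mul_sum, htel]
    _ ≤ C * 1 := by
        apply mul_le_mul_of_nonneg_left _ hCn
        nlinarith
    _ ≤ KΦ * Kζ * Real.exp κ / κ * (2 * Bg ^ 2 + 2) * (S1 + S2 + S3) := by
        rw [hCdef, hAdef, mul_one]
        have hA' : 2 * Bg ^ 2 * S1 + 2 * S3 ≤ (2 * Bg ^ 2 + 2) * (S1 + S2 + S3) := by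
          nlinarith [sq_nonneg Bg]
        have h5 := mul_le_mul_of_nonneg_left hA' hP.le
        calc KΦ * Kζ * (2 * Bg ^ 2 * S1 + 2 * S3) * (Real.exp κ / κ)
            = KΦ * Kζ * Real.exp κ / κ * (2 * Bg ^ 2 * S1 + 2 * S3) := by ring
          _ ≤ KΦ * Kζ * Real.exp κ / κ * ((2 * Bg ^ 2 + 2) * (S1 + S2 + S3)) := h5
          _ = KΦ * Kζ * Real.exp κ / κ * (2 * Bg ^ 2 + 2) * (S1 + S2 + S3) := by ring
end

section
/- Fix y ∈ ℝ^s and suppose the Alekseev representation z̄(t̃_n) = λ(y) + Φ(t̃_n, t̃_{n₀}, z̄(t̃_{n₀}))(z̄(t̃_{n₀}) − λ(y)) + A_n + B_n + C_n + D_n holds, where A_n := Σ_{k=n₀}^{n−1} ∫_{t̃_k}^{t̃_{k+1}} Φ(t̃_n,s,z̄(s))[h(z̄(t̃_k),y) − h(z̄(s),y)] ds, B_n := Σ_k ∫ Φ(t̃_n,s,z̄(s)) ε_k ∇λ(y_k) M^{(2)}_{k+1} ds, C_n := Σ_k ∫ Φ(t̃_n,s,z̄(s)) ∇λ(y_k)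 ε_k g(x_k,y_k) ds, and D_n := Σ_k ∫ Φ(t̃_n,s,z̄(s)) (ζ_{k+1}/a_k) ds. Then there exists K > 0 depending only on K_Φ, κ, L_h, L_λ, K_ζ, B_g such that for every n ≥ n₀: ‖z̄(t̃_n) − λ(y)‖ ≤ K [ e^{−κ(t̃_n−t̃_{n₀})}‖z̄(t̃_{n₀}) − λ(y)‖ + sup_{n₀≤k≤n−1} b_k + sup b_k‖M^{(2)}_{k+1}‖ + sup b_k² + sup b_k²‖M^{(2)}_{k+1}‖ + sup b_k²‖M^{(2)}_{k+1}‖² + sup ε_k‖M^{(2)}_{k+1}‖ + sup ε_k + sup ε_k b_k + sup ε_k b_k‖M^{(2)}_{k+1}‖ + sup ε_k b_k‖M^{(2)}_{k+1}‖² ], all suprema over n₀ ≤ k ≤ n−1. -/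
open scoped BigOperators

lemma aux_sup {f : ℕ → ℝ} (hf : ∀ k, 0 ≤ f k) (s : Finset ℕ) :
    (0 ≤ ⨆ j ∈ s, f j) ∧ ∀ k ∈ s, f k ≤ ⨆ j ∈ s, f j := by
  set g : ℕ → ℝ := fun j => ⨆ _ : j ∈ s, f j with hg
  have hgval : ∀ j ∈ s, g j = f j := by
    intro j hj
    simp only [hg]
    exact ciSup_const (ι := (j ∈ s)) (hι := ⟨hj⟩)
  have hgval' : ∀ j ∉ s, g j = 0 := by
    intro j hj
    simp only [hg]
    haveI : IsEmpty (j ∈ s) := ⟨hj⟩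
    exact Real.iSup_of_isEmpty _
  have hg0 : ∀ j, 0 ≤ g j := by
    intro j
    by_cases hj : j ∈ s
    · rw [hgval j hj]; exact hf j
    · rw [hgval' j hj]
  have hbdd : BddAbove (Set.range g) := by
    refine ⟨∑ j ∈ s, f j, ?_⟩
    rintro _ ⟨j, rfl⟩
    by_cases hj : j ∈ s
    · rw [hgval j hj]; exact Finset.single_le_sum (fun i _ => hf i) hj
    · rw [hgval' j hj]; exact Finset.sum_nonneg fun i _ => hf i
  exact ⟨le_trans (hg0 0) (le_ciSup hbdd 0),
    fun k hk => by rw [← hgval k hk]; exact le_ciSup hbdd k⟩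

lemma aux_exp_sum (κ : ℝ) (hκ : 0 < κ) (a t : ℕ → ℝ) (ha : ∀ k, 0 < a k ∧ a k < 1)
    (htsucc : ∀ k, t (k + 1) = t k + a k) (n₀ n : ℕ) (hn : n₀ ≤ n) :
    ∑ k ∈ Finset.Ico n₀ n, a k * Real.exp (-κ * (t n - t (k + 1))) ≤ Real.exp κ / κ := by
  have key : ∀ k, a k * Real.exp (-κ * (t n - t (k + 1))) ≤
      (Real.exp κ / κ) * (Real.exp (-κ * (t n - t (k + 1))) - Real.exp (-κ * (t n - t k))) := by
    intro k
    obtain ⟨h0, h1⟩ := ha k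
    set u := κ * a k with hu
    have hu0 : 0 < u := mul_pos hκ h0
    have huκ : u ≤ κ := by nlinarith
    have hE : Real.exp (-κ * (t n - t k)) =
        Real.exp (-κ * (t n - t (k + 1))) * Real.exp (-u) := by
      rw [← Real.exp_add]; congr 1; rw [htsucc k]; ring
    have h2 : u + 1 ≤ Real.exp u := Real.add_one_le_exp u
    have h3 : 1 ≤ Real.exp (κ - u) := Real.one_le_exp (by linarith)
    have h4 : Real.exp κ * Real.exp (-u) = Real.exp (κ - u) := by
      rw [← Real.exp_add]; ring_nf
    have h5 : Real.exp κ = Real.exp (κ - u) * Real.exp u := by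
      rw [← Real.exp_add]; ring_nf
    have h6 : u ≤ Real.exp κ - Real.exp (κ - u) := by nlinarith
    have hEpos := Real.exp_pos (-κ * (t n - t (k + 1)))
    rw [hE]
    have hak : a k = u / κ := by field_simp [hu]; rw [hu, mul_comm]
    rw [hak, div_mul_eq_mul_div, div_mul_eq_mul_div, div_le_div_iff₀ hκ hκ]
    have h7 := mul_le_mul_of_nonneg_right (mul_le_mul_of_nonneg_right h6 hEpos.le) hκ.le
    have h8 : Real.exp κ * Real.exp (-u) * (Real.exp (-κ * (t n - t (k + 1))) * κ) =
        Real.exp (κ - u) * (Real.exp (-κ * (t n - t (k + 1))) * κ) := by rw [h4]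
    nlinarith [h7, h8]
  calc ∑ k ∈ Finset.Ico n₀ n, a k * Real.exp (-κ * (t n - t (k + 1)))
      ≤ ∑ k ∈ Finset.Ico n₀ n, (Real.exp κ / κ) *
          (Real.exp (-κ * (t n - t (k + 1))) - Real.exp (-κ * (t n - t k))) :=
        Finset.sum_le_sum fun k _ => key k
    _ = (Real.exp κ / κ) * ∑ k ∈ Finset.Ico n₀ n,
          ((fun j => Real.exp (-κ * (t n - t j))) (k + 1) -
           (fun j => Real.exp (-κ * (t n - t j))) k) := by rw [Finset.mul_sum]
    _ = (Real.exp κ / κ) * (Real.exp (-κ * (t n - t n)) - Real.exp (-κ * (t n - t n₀))) := by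
        rw [Finset.sum_Ico_eq_sub _ hn,
          Finset.sum_range_sub (fun j => Real.exp (-κ * (t n - t j))),
          Finset.sum_range_sub (fun j => Real.exp (-κ * (t n - t j)))]
        ring_nf
    _ ≤ Real.exp κ / κ := by
        have h1 : Real.exp (-κ * (t n - t n)) = 1 := by simp
        have h2 : (0:ℝ) < Real.exp (-κ * (t n - t n₀)) := Real.exp_pos _
        have h3 : 0 ≤ Real.exp κ / κ := le_of_lt (div_pos (Real.exp_pos _) hκ)
        nlinarith

lemma sum_integral_bound {d : ℕ} (t a : ℕ → ℝ) (ha : ∀ k, 0 < a k ∧ a k < 1)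
    (htsucc : ∀ k, t (k + 1) = t k + a k) (κ KΦ : ℝ) (hKΦ : 0 ≤ KΦ)
    (n₀ n : ℕ)
    (expsum : ∑ k ∈ Finset.Ico n₀ n, a k * Real.exp (-κ * (t n - t (k + 1))) ≤ Real.exp κ / κ)
    (F : ℕ → ℝ → EuclideanSpace ℝ (Fin d)) (C : ℝ) (hC : 0 ≤ C)
    (hF : ∀ k ∈ Finset.Ico n₀ n, ∀ s ∈ Set.Ioc (t k) (t (k + 1)),
      ‖F k s‖ ≤ KΦ * Real.exp (-κ * (t n - t (k + 1))) * C) :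
    ‖∑ k ∈ Finset.Ico n₀ n, ∫ s in t k..t (k + 1), F k s‖ ≤ KΦ * C * (Real.exp κ / κ) := by
  have hstep : ∀ k, t k ≤ t (k + 1) := fun k => by
    have := (ha k).1; rw [htsucc k]; linarith
  calc ‖∑ k ∈ Finset.Ico n₀ n, ∫ s in t k..t (k + 1), F k s‖
      ≤ ∑ k ∈ Finset.Ico n₀ n, ‖∫ s in t k..t (k + 1), F k s‖ := norm_sum_le _ _
    _ ≤ ∑ k ∈ Finset.Ico n₀ n,
        KΦ * C * (a k * Real.exp (-κ * (t n - t (k + 1)))) := by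
        refine Finset.sum_le_sum fun k hk => ?_
        have hb : ∀ s ∈ Set.uIoc (t k) (t (k + 1)),
            ‖F k s‖ ≤ KΦ * Real.exp (-κ * (t n - t (k + 1))) * C := by
          intro s hs
          rw [Set.uIoc_of_le (hstep k)] at hs
          exact hF k hk s hs
        have h1 := intervalIntegral.norm_integral_le_of_norm_le_const hb
        have h2 : |t (k + 1) - t k| = a k := by
          rw [htsucc k, abs_of_nonneg (by linarith [(ha k).1])]; ring
        rw [h2] at h1
        calc ‖∫ s in t k..t (k + 1), F k s‖
            ≤ KΦ * Real.exp (-κ * (t n - t (k + 1))) * C * a k := h1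
          _ = KΦ * C * (a k * Real.exp (-κ * (t n - t (k + 1)))) := by ring
    _ = KΦ * C * ∑ k ∈ Finset.Ico n₀ n, a k * Real.exp (-κ * (t n - t (k + 1))) := by
        rw [Finset.mul_sum]
    _ ≤ KΦ * C * (Real.exp κ / κ) :=
        mul_le_mul_of_nonneg_left expsum (mul_nonneg hKΦ hC)

set_option maxHeartbeats 2000000 in
/-- Deviation bound for the interpolated auxiliary iterates `z̄`, assuming the
Alekseev representation `z̄(t̃_n) = λ(y) + Φ(t̃_n,t̃_{n₀},z̄(t̃_{n₀}))(z̄(t̃_{n₀}) − λ(y))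
+ A_n + B_n + C_n + D_n`. -/
theorem zbar_deviation_bound {d e : ℕ}
    (a b : ℕ → ℝ)
    (hab : ∀ k, 0 < b k ∧ b k ≤ a k ∧ a k < 1)
    (t : ℕ → ℝ) (ht0 : t 0 = 0) (htsucc : ∀ k, t (k + 1) = t k + a k)
    (h : EuclideanSpace ℝ (Fin d) → EuclideanSpace ℝ (Fin e) → EuclideanSpace ℝ (Fin d))
    (g : EuclideanSpace ℝ (Fin d) → EuclideanSpace ℝ (Fin e) → EuclideanSpace ℝ (Fin e))
    (Lh Lg : NNReal)
    (hLip : LipschitzWith Lh fun p : EuclideanSpace ℝ (Fin d) × EuclideanSpace ℝ (Fin e) =>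
      h p.1 p.2)
    (gLip : LipschitzWith Lg fun p : EuclideanSpace ℝ (Fin d) × EuclideanSpace ℝ (Fin e) =>
      g p.1 p.2)
    (Bg : ℝ) (hBg : ∀ x' y', ‖g x' y'‖ ≤ Bg)
    (lam : EuclideanSpace ℝ (Fin e) → EuclideanSpace ℝ (Fin d))
    (Dlam : EuclideanSpace ℝ (Fin e) →
      (EuclideanSpace ℝ (Fin e) →L[ℝ] EuclideanSpace ℝ (Fin d)))
    (hlam : ∀ y', HasFDerivAt lam (Dlam y') y')
    (Llam : NNReal) (hlamLip : LipschitzWith Llam lam)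
    (hDlam : ∀ y', ‖Dlam y'‖ ≤ (Llam : ℝ))
    (hlameq : ∀ y', h (lam y') y' = 0)
    (x : ℕ → EuclideanSpace ℝ (Fin d)) (y : ℕ → EuclideanSpace ℝ (Fin e))
    (M1 : ℕ → EuclideanSpace ℝ (Fin d)) (M2 : ℕ → EuclideanSpace ℝ (Fin e))
    (hx : ∀ k, x (k + 1) = x k + a k • (h (x k) (y k) + M1 (k + 1)))
    (hy : ∀ k, y (k + 1) = y k + b k • (g (x k) (y k) + M2 (k + 1)))
    (z : ℕ → EuclideanSpace ℝ (Fin d)) (hz : ∀ k, z k = lam (y k))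
    (zbar : ℝ → EuclideanSpace ℝ (Fin d))
    (hzbar : ∀ k, ∀ s ∈ Set.Icc (t k) (t (k + 1)),
      zbar s = z k + ((s - t k) / a k) • (z (k + 1) - z k))
    (ζ : ℕ → EuclideanSpace ℝ (Fin d))
    (hζdef : ∀ k, ζ (k + 1) = z (k + 1) - z k - Dlam (y k) (y (k + 1) - y k))
    (Kζ : ℝ) (hKζ : 0 < Kζ)
    (hζb : ∀ k, ‖ζ (k + 1)‖ ≤ Kζ * ‖y (k + 1) - y k‖ ^ 2)
    (Φ : ℝ → ℝ → EuclideanSpace ℝ (Fin d) →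
      (EuclideanSpace ℝ (Fin d) →L[ℝ] EuclideanSpace ℝ (Fin d)))
    (KΦ κ : ℝ) (hKΦ : 0 < KΦ) (hκ : 0 < κ)
    (hΦ : ∀ t' s w, s ≤ t' → ‖Φ t' s w‖ ≤ KΦ * Real.exp (-κ * (t' - s)))
    (n₀ : ℕ)
    (Y : EuclideanSpace ℝ (Fin e))
    (hrep : ∀ n, n₀ ≤ n →
      zbar (t n) = lam Y + Φ (t n) (t n₀) (zbar (t n₀)) (zbar (t n₀) - lam Y) +
        (∑ k ∈ Finset.Ico n₀ n,
          ∫ s in t k..t (k + 1), Φ (t n) s (zbar s) (h (zbar (t k)) Y - h (zbar s) Y)) +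
        (∑ k ∈ Finset.Ico n₀ n,
          ∫ s in t k..t (k + 1),
            (b k / a k) • Φ (t n) s (zbar s) (Dlam (y k) (M2 (k + 1)))) +
        (∑ k ∈ Finset.Ico n₀ n,
          ∫ s in t k..t (k + 1),
            Φ (t n) s (zbar s) (Dlam (y k) ((b k / a k) • g (x k) (y k)))) +
        (∑ k ∈ Finset.Ico n₀ n,
          ∫ s in t k..t (k + 1), Φ (t n) s (zbar s) ((a k)⁻¹ • ζ (k + 1)))) :
    ∃ K > (0 : ℝ), ∀ n, n₀ ≤ n →
      ‖zbar (t n) - lam Y‖ ≤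
        K * (Real.exp (-κ * (t n - t n₀)) * ‖zbar (t n₀) - lam Y‖ +
             (⨆ k ∈ Finset.Ico n₀ n, b k) +
             (⨆ k ∈ Finset.Ico n₀ n, b k * ‖M2 (k + 1)‖) +
             (⨆ k ∈ Finset.Ico n₀ n, (b k) ^ 2) +
             (⨆ k ∈ Finset.Ico n₀ n, (b k) ^ 2 * ‖M2 (k + 1)‖) +
             (⨆ k ∈ Finset.Ico n₀ n, (b k) ^ 2 * ‖M2 (k + 1)‖ ^ 2) +
             (⨆ k ∈ Finset.Ico n₀ n, (b k / a k) * ‖M2 (k + 1)‖) +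
             (⨆ k ∈ Finset.Ico n₀ n, b k / a k) +
             (⨆ k ∈ Finset.Ico n₀ n, (b k / a k) * b k) +
             (⨆ k ∈ Finset.Ico n₀ n, (b k / a k) * b k * ‖M2 (k + 1)‖) +
             (⨆ k ∈ Finset.Ico n₀ n, (b k / a k) * b k * ‖M2 (k + 1)‖ ^ 2)) := by

  -- basic positivity facts
  have hbpos : ∀ k, 0 < b k := fun k => (hab k).1
  have hapos : ∀ k, 0 < a k := fun k => lt_of_lt_of_le (hab k).1 (hab k).2.1
  have hba : ∀ k, 0 ≤ b k / a k := fun k => div_nonneg (hbpos k).le (hapos k).le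
  have hBg0 : 0 ≤ Bg := le_trans (norm_nonneg _) (hBg (x 0) (y 0))
  have htmono : ∀ m n', m ≤ n' → t m ≤ t n' := by
    intro m n' hmn
    induction n', hmn using Nat.le_induction with
    | base => exact le_rfl
    | succ p hp ih => rw [htsucc p]; linarith [hapos p]
  have htk : ∀ k, zbar (t k) = z k := by
    intro k
    have h1 := hzbar k (t k) ⟨le_rfl, by rw [htsucc k]; linarith [hapos k]⟩
    simpa using h1
  have hQ : (0:ℝ) < Real.exp κ / κ := div_pos (Real.exp_pos _) hκ
  set Q := Real.exp κ / κ with hQdef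
  have hyd : ∀ k, ‖y (k + 1) - y k‖ ≤ b k * (Bg + ‖M2 (k + 1)‖) := by
    intro k
    have e1 : y (k + 1) - y k = b k • (g (x k) (y k) + M2 (k + 1)) := by rw [hy k]; abel
    rw [e1, norm_smul, Real.norm_eq_abs, abs_of_pos (hbpos k)]
    refine mul_le_mul_of_nonneg_left ?_ (hbpos k).le
    exact le_trans (norm_add_le _ _) (add_le_add_left (hBg _ _) _)
  have hzd : ∀ k, ‖z (k + 1) - z k‖ ≤ (Llam : ℝ) * (b k * (Bg + ‖M2 (k + 1)‖)) := by
    intro k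
    rw [hz (k + 1), hz k]
    have l := hlamLip.dist_le_mul (y (k + 1)) (y k)
    rw [dist_eq_norm, dist_eq_norm] at l
    exact le_trans l (mul_le_mul_of_nonneg_left (hyd k) Llam.coe_nonneg)
  have hzbar_close : ∀ k, ∀ s ∈ Set.Ioc (t k) (t (k + 1)),
      ‖zbar s - z k‖ ≤ ‖z (k + 1) - z k‖ := by
    intro k s hs
    have hsI : s ∈ Set.Icc (t k) (t (k + 1)) := ⟨hs.1.le, hs.2⟩
    rw [hzbar k s hsI, add_sub_cancel_left, norm_smul, Real.norm_eq_abs]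
    have h0 : 0 ≤ (s - t k) / a k := div_nonneg (by linarith [hs.1]) (hapos k).le
    have h1 : (s - t k) / a k ≤ 1 := by
      rw [div_le_one (hapos k)]
      have := htsucc k; have := hs.2; linarith
    rw [abs_of_nonneg h0]
    nlinarith [norm_nonneg (z (k + 1) - z k)]
  have hLipfst : ∀ u v : EuclideanSpace ℝ (Fin d),
      ‖h u Y - h v Y‖ ≤ (Lh : ℝ) * ‖u - v‖ := by
    intro u v
    have l := hLip.dist_le_mul (u, Y) (v, Y)
    rw [Prod.dist_eq] at l
    simp only [dist_self] at l
    rw [max_eq_left dist_nonneg] at l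
    rw [dist_eq_norm, dist_eq_norm] at l
    exact l
  have hDapp : ∀ y' (v : EuclideanSpace ℝ (Fin e)), ‖Dlam y' v‖ ≤ (Llam : ℝ) * ‖v‖ :=
    fun y' v => le_trans ((Dlam y').le_opNorm v)
      (mul_le_mul_of_nonneg_right (hDlam y') (norm_nonneg v))
  set K := KΦ + KΦ * Q * ((Lh : ℝ) * Llam * Bg + (Lh : ℝ) * Llam + (Llam : ℝ) +
      (Llam : ℝ) * Bg + 2 * Kζ * Bg ^ 2 + 2 * Kζ) + 1 with hKdef
  have n1 : 0 ≤ KΦ * Q * ((Lh : ℝ) * Llam * Bg) :=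
    mul_nonneg (mul_nonneg hKΦ.le hQ.le)
      (mul_nonneg (mul_nonneg Lh.coe_nonneg Llam.coe_nonneg) hBg0)
  have n2 : 0 ≤ KΦ * Q * ((Lh : ℝ) * Llam) :=
    mul_nonneg (mul_nonneg hKΦ.le hQ.le) (mul_nonneg Lh.coe_nonneg Llam.coe_nonneg)
  have n3 : 0 ≤ KΦ * Q * (Llam : ℝ) :=
    mul_nonneg (mul_nonneg hKΦ.le hQ.le) Llam.coe_nonneg
  have n4 : 0 ≤ KΦ * Q * ((Llam : ℝ) * Bg) :=
    mul_nonneg (mul_nonneg hKΦ.le hQ.le) (mul_nonneg Llam.coe_nonneg hBg0)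
  have n5 : 0 ≤ KΦ * Q * (2 * Kζ * Bg ^ 2) :=
    mul_nonneg (mul_nonneg hKΦ.le hQ.le)
      (mul_nonneg (by linarith [hKζ.le]) (sq_nonneg Bg))
  have n6 : 0 ≤ KΦ * Q * (2 * Kζ) :=
    mul_nonneg (mul_nonneg hKΦ.le hQ.le) (by linarith [hKζ.le])
  have hK0 : (0:ℝ) < K := by rw [hKdef]; linarith only [n1, n2, n3, n4, n5, n6, hKΦ]
  refine ⟨K, hK0, ?_⟩
  intro n hn
  -- sup terms
  set T1 := ⨆ k ∈ Finset.Ico n₀ n, b k with hT1def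
  set T2 := ⨆ k ∈ Finset.Ico n₀ n, b k * ‖M2 (k + 1)‖ with hT2def
  set T3 := ⨆ k ∈ Finset.Ico n₀ n, (b k) ^ 2 with hT3def
  set T4 := ⨆ k ∈ Finset.Ico n₀ n, (b k) ^ 2 * ‖M2 (k + 1)‖ with hT4def
  set T5 := ⨆ k ∈ Finset.Ico n₀ n, (b k) ^ 2 * ‖M2 (k + 1)‖ ^ 2 with hT5def
  set T6 := ⨆ k ∈ Finset.Ico n₀ n, (b k / a k) * ‖M2 (k + 1)‖ with hT6def
  set T7 := ⨆ k ∈ Finset.Ico n₀ n, b k / a k with hT7def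
  set T8 := ⨆ k ∈ Finset.Ico n₀ n, (b k / a k) * b k with hT8def
  set T9 := ⨆ k ∈ Finset.Ico n₀ n, (b k / a k) * b k * ‖M2 (k + 1)‖ with hT9def
  set T10 := ⨆ k ∈ Finset.Ico n₀ n, (b k / a k) * b k * ‖M2 (k + 1)‖ ^ 2 with hT10def
  have A1 := aux_sup (f := fun k => b k) (fun k => (hbpos k).le) (Finset.Ico n₀ n)
  have A2 := aux_sup (f := fun k => b k * ‖M2 (k + 1)‖)
    (fun k => mul_nonneg (hbpos k).le (norm_nonneg _)) (Finset.Ico n₀ n)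
  have A3 := aux_sup (f := fun k => (b k) ^ 2) (fun k => sq_nonneg _) (Finset.Ico n₀ n)
  have A4 := aux_sup (f := fun k => (b k) ^ 2 * ‖M2 (k + 1)‖)
    (fun k => mul_nonneg (sq_nonneg _) (norm_nonneg _)) (Finset.Ico n₀ n)
  have A5 := aux_sup (f := fun k => (b k) ^ 2 * ‖M2 (k + 1)‖ ^ 2)
    (fun k => mul_nonneg (sq_nonneg _) (sq_nonneg _)) (Finset.Ico n₀ n)
  have A6 := aux_sup (f := fun k => (b k / a k) * ‖M2 (k + 1)‖)
    (fun k => mul_nonneg (hba k) (norm_nonneg _)) (Finset.Ico n₀ n)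
  have A7 := aux_sup (f := fun k => b k / a k) (fun k => hba k) (Finset.Ico n₀ n)
  have A8 := aux_sup (f := fun k => (b k / a k) * b k)
    (fun k => mul_nonneg (hba k) (hbpos k).le) (Finset.Ico n₀ n)
  have A9 := aux_sup (f := fun k => (b k / a k) * b k * ‖M2 (k + 1)‖)
    (fun k => mul_nonneg (mul_nonneg (hba k) (hbpos k).le) (norm_nonneg _)) (Finset.Ico n₀ n)
  have A10 := aux_sup (f := fun k => (b k / a k) * b k * ‖M2 (k + 1)‖ ^ 2)
    (fun k => mul_nonneg (mul_nonneg (hba k) (hbpos k).le) (sq_nonneg _)) (Finset.Ico n₀ n)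
  have hT1n : 0 ≤ T1 := A1.1
  have hT1 : ∀ k ∈ Finset.Ico n₀ n, b k ≤ T1 := A1.2
  have hT2n : 0 ≤ T2 := A2.1
  have hT2 : ∀ k ∈ Finset.Ico n₀ n, b k * ‖M2 (k + 1)‖ ≤ T2 := A2.2
  have hT3n : 0 ≤ T3 := A3.1
  have hT4n : 0 ≤ T4 := A4.1
  have hT5n : 0 ≤ T5 := A5.1
  have hT6n : 0 ≤ T6 := A6.1
  have hT6 : ∀ k ∈ Finset.Ico n₀ n, (b k / a k) * ‖M2 (k + 1)‖ ≤ T6 := A6.2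
  have hT7n : 0 ≤ T7 := A7.1
  have hT7 : ∀ k ∈ Finset.Ico n₀ n, b k / a k ≤ T7 := A7.2
  have hT8n : 0 ≤ T8 := A8.1
  have hT8 : ∀ k ∈ Finset.Ico n₀ n, (b k / a k) * b k ≤ T8 := A8.2
  have hT9n : 0 ≤ T9 := A9.1
  have hT10n : 0 ≤ T10 := A10.1
  have hT10 : ∀ k ∈ Finset.Ico n₀ n, (b k / a k) * b k * ‖M2 (k + 1)‖ ^ 2 ≤ T10 := A10.2
  have hexp := aux_exp_sum κ hκ a t (fun k => ⟨hapos k, (hab k).2.2⟩) htsucc n₀ n hn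
  -- Φ application bound
  have hΦapp : ∀ k ∈ Finset.Ico n₀ n, ∀ s ∈ Set.Ioc (t k) (t (k + 1)),
      ∀ v : EuclideanSpace ℝ (Fin d),
      ‖Φ (t n) s (zbar s) v‖ ≤ KΦ * Real.exp (-κ * (t n - t (k + 1))) * ‖v‖ := by
    intro k hk s hs v
    have hk' : k + 1 ≤ n := (Finset.mem_Ico.mp hk).2
    have hsn : s ≤ t n := le_trans hs.2 (htmono _ _ hk')
    have o2 := hΦ (t n) s (zbar s) hsn
    have o3 : Real.exp (-κ * (t n - s)) ≤ Real.exp (-κ * (t n - t (k + 1))) :=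
      Real.exp_le_exp.mpr (by linarith [mul_nonneg hκ.le (sub_nonneg.mpr hs.2)])
    calc ‖Φ (t n) s (zbar s) v‖ ≤ ‖Φ (t n) s (zbar s)‖ * ‖v‖ :=
          (Φ (t n) s (zbar s)).le_opNorm v
      _ ≤ (KΦ * Real.exp (-κ * (t n - s))) * ‖v‖ :=
          mul_le_mul_of_nonneg_right o2 (norm_nonneg v)
      _ ≤ KΦ * Real.exp (-κ * (t n - t (k + 1))) * ‖v‖ :=
          mul_le_mul_of_nonneg_right (mul_le_mul_of_nonneg_left o3 hKΦ.le) (norm_nonneg v)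
  have hexpk : ∀ k : ℕ, 0 ≤ KΦ * Real.exp (-κ * (t n - t (k + 1))) :=
    fun k => mul_nonneg hKΦ.le (Real.exp_pos _).le
  -- bound on the A-sum
  have hCA : (0:ℝ) ≤ (Lh : ℝ) * ((Llam : ℝ) * (Bg * T1 + T2)) := by
    refine mul_nonneg Lh.coe_nonneg (mul_nonneg Llam.coe_nonneg ?_)
    exact add_nonneg (mul_nonneg hBg0 hT1n) hT2n
  have hA : ‖∑ k ∈ Finset.Ico n₀ n,
      ∫ s in t k..t (k + 1), Φ (t n) s (zbar s) (h (zbar (t k)) Y - h (zbar s) Y)‖ ≤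
      KΦ * ((Lh : ℝ) * ((Llam : ℝ) * (Bg * T1 + T2))) * Q := by
    refine sum_integral_bound t a (fun k => ⟨hapos k, (hab k).2.2⟩) htsucc κ KΦ hKΦ.le
      n₀ n hexp _ _ hCA ?_
    intro k hk s hs
    have hv : ‖h (zbar (t k)) Y - h (zbar s) Y‖ ≤
        (Lh : ℝ) * ((Llam : ℝ) * (Bg * T1 + T2)) := by
      calc ‖h (zbar (t k)) Y - h (zbar s) Y‖ ≤ (Lh : ℝ) * ‖zbar (t k) - zbar s‖ :=
            hLipfst _ _
        _ = (Lh : ℝ) * ‖zbar s - z k‖ := by rw [norm_sub_rev, htk k]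
        _ ≤ (Lh : ℝ) * ‖z (k + 1) - z k‖ :=
            mul_le_mul_of_nonneg_left (hzbar_close k s hs) Lh.coe_nonneg
        _ ≤ (Lh : ℝ) * ((Llam : ℝ) * (b k * (Bg + ‖M2 (k + 1)‖))) :=
            mul_le_mul_of_nonneg_left (hzd k) Lh.coe_nonneg
        _ = (Lh : ℝ) * ((Llam : ℝ) * (Bg * b k + b k * ‖M2 (k + 1)‖)) := by ring
        _ ≤ (Lh : ℝ) * ((Llam : ℝ) * (Bg * T1 + T2)) := by
            refine mul_le_mul_of_nonneg_left
              (mul_le_mul_of_nonneg_left ?_ Llam.coe_nonneg) Lh.coe_nonneg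
            exact add_le_add (mul_le_mul_of_nonneg_left (hT1 k hk) hBg0) (hT2 k hk)
    exact le_trans (hΦapp k hk s hs _) (mul_le_mul_of_nonneg_left hv (hexpk k))
  -- bound on the B-sum
  have hCB : (0:ℝ) ≤ (Llam : ℝ) * T6 := mul_nonneg Llam.coe_nonneg hT6n
  have hB : ‖∑ k ∈ Finset.Ico n₀ n,
      ∫ s in t k..t (k + 1),
        (b k / a k) • Φ (t n) s (zbar s) (Dlam (y k) (M2 (k + 1)))‖ ≤
      KΦ * ((Llam : ℝ) * T6) * Q := by
    refine sum_integral_bound t a (fun k => ⟨hapos k, (hab k).2.2⟩) htsucc κ KΦ hKΦ.le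
      n₀ n hexp _ _ hCB ?_
    intro k hk s hs
    rw [norm_smul, Real.norm_eq_abs, abs_of_nonneg (hba k)]
    calc (b k / a k) * ‖Φ (t n) s (zbar s) (Dlam (y k) (M2 (k + 1)))‖
        ≤ (b k / a k) * (KΦ * Real.exp (-κ * (t n - t (k + 1))) * ‖Dlam (y k) (M2 (k + 1))‖) :=
          mul_le_mul_of_nonneg_left (hΦapp k hk s hs _) (hba k)
      _ ≤ (b k / a k) * (KΦ * Real.exp (-κ * (t n - t (k + 1))) * ((Llam : ℝ) * ‖M2 (k + 1)‖)) :=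
          mul_le_mul_of_nonneg_left (mul_le_mul_of_nonneg_left (hDapp _ _) (hexpk k)) (hba k)
      _ = KΦ * Real.exp (-κ * (t n - t (k + 1))) * ((Llam : ℝ) * ((b k / a k) * ‖M2 (k + 1)‖)) := by
          ring
      _ ≤ KΦ * Real.exp (-κ * (t n - t (k + 1))) * ((Llam : ℝ) * T6) :=
          mul_le_mul_of_nonneg_left
            (mul_le_mul_of_nonneg_left (hT6 k hk) Llam.coe_nonneg) (hexpk k)
  -- bound on the C-sum
  have hCC : (0:ℝ) ≤ (Llam : ℝ) * (Bg * T7) :=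
    mul_nonneg Llam.coe_nonneg (mul_nonneg hBg0 hT7n)
  have hC : ‖∑ k ∈ Finset.Ico n₀ n,
      ∫ s in t k..t (k + 1),
        Φ (t n) s (zbar s) (Dlam (y k) ((b k / a k) • g (x k) (y k)))‖ ≤
      KΦ * ((Llam : ℝ) * (Bg * T7)) * Q := by
    refine sum_integral_bound t a (fun k => ⟨hapos k, (hab k).2.2⟩) htsucc κ KΦ hKΦ.le
      n₀ n hexp _ _ hCC ?_
    intro k hk s hs
    have hv : ‖Dlam (y k) ((b k / a k) • g (x k) (y k))‖ ≤ (Llam : ℝ) * (Bg * T7) := by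
      calc ‖Dlam (y k) ((b k / a k) • g (x k) (y k))‖
          ≤ (Llam : ℝ) * ‖(b k / a k) • g (x k) (y k)‖ := hDapp _ _
        _ = (Llam : ℝ) * ((b k / a k) * ‖g (x k) (y k)‖) := by
            rw [norm_smul, Real.norm_eq_abs, abs_of_nonneg (hba k)]
        _ ≤ (Llam : ℝ) * ((b k / a k) * Bg) :=
            mul_le_mul_of_nonneg_left
              (mul_le_mul_of_nonneg_left (hBg _ _) (hba k)) Llam.coe_nonneg
        _ = (Llam : ℝ) * (Bg * (b k / a k)) := by ring
        _ ≤ (Llam : ℝ) * (Bg * T7) :=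
            mul_le_mul_of_nonneg_left
              (mul_le_mul_of_nonneg_left (hT7 k hk) hBg0) Llam.coe_nonneg
    exact le_trans (hΦapp k hk s hs _) (mul_le_mul_of_nonneg_left hv (hexpk k))
  -- bound on the D-sum
  have hCD : (0:ℝ) ≤ 2 * Kζ * Bg ^ 2 * T8 + 2 * Kζ * T10 := by
    have := hKζ.le
    refine add_nonneg (mul_nonneg (mul_nonneg (by linarith) (sq_nonneg Bg)) hT8n)
      (mul_nonneg (by linarith) hT10n)
  have hD : ‖∑ k ∈ Finset.Ico n₀ n,
      ∫ s in t k..t (k + 1), Φ (t n) s (zbar s) ((a k)⁻¹ • ζ (k + 1))‖ ≤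
      KΦ * (2 * Kζ * Bg ^ 2 * T8 + 2 * Kζ * T10) * Q := by
    refine sum_integral_bound t a (fun k => ⟨hapos k, (hab k).2.2⟩) htsucc κ KΦ hKΦ.le
      n₀ n hexp _ _ hCD ?_
    intro k hk s hs
    have hv : ‖(a k)⁻¹ • ζ (k + 1)‖ ≤ 2 * Kζ * Bg ^ 2 * T8 + 2 * Kζ * T10 := by
      have hinv : (0:ℝ) ≤ (a k)⁻¹ := (inv_nonneg).mpr (hapos k).le
      have hy2 : ‖y (k + 1) - y k‖ ^ 2 ≤ (b k * (Bg + ‖M2 (k + 1)‖)) ^ 2 :=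
        pow_le_pow_left₀ (norm_nonneg _) (hyd k) 2
      have hsq : (Bg + ‖M2 (k + 1)‖) ^ 2 ≤ 2 * Bg ^ 2 + 2 * ‖M2 (k + 1)‖ ^ 2 := by
        linarith only [two_mul_le_add_sq Bg ‖M2 (k + 1)‖]
      calc ‖(a k)⁻¹ • ζ (k + 1)‖ = (a k)⁻¹ * ‖ζ (k + 1)‖ := by
            rw [norm_smul, Real.norm_eq_abs, abs_of_nonneg hinv]
        _ ≤ (a k)⁻¹ * (Kζ * ‖y (k + 1) - y k‖ ^ 2) :=
            mul_le_mul_of_nonneg_left (hζb k) hinv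
        _ ≤ (a k)⁻¹ * (Kζ * (b k * (Bg + ‖M2 (k + 1)‖)) ^ 2) :=
            mul_le_mul_of_nonneg_left (mul_le_mul_of_nonneg_left hy2 hKζ.le) hinv
        _ = Kζ * ((b k / a k) * b k) * (Bg + ‖M2 (k + 1)‖) ^ 2 := by
            rw [div_eq_mul_inv]; ring
        _ ≤ Kζ * ((b k / a k) * b k) * (2 * Bg ^ 2 + 2 * ‖M2 (k + 1)‖ ^ 2) :=
            mul_le_mul_of_nonneg_left hsq
              (mul_nonneg hKζ.le (mul_nonneg (hba k) (hbpos k).le))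
        _ = 2 * Kζ * Bg ^ 2 * ((b k / a k) * b k) +
            2 * Kζ * ((b k / a k) * b k * ‖M2 (k + 1)‖ ^ 2) := by ring
        _ ≤ 2 * Kζ * Bg ^ 2 * T8 + 2 * Kζ * T10 := by
            have c1 : (0:ℝ) ≤ 2 * Kζ * Bg ^ 2 :=
              mul_nonneg (by linarith [hKζ.le]) (sq_nonneg Bg)
            exact add_le_add (mul_le_mul_of_nonneg_left (hT8 k hk) c1)
              (mul_le_mul_of_nonneg_left (hT10 k hk) (by linarith [hKζ.le]))
    exact le_trans (hΦapp k hk s hs _) (mul_le_mul_of_nonneg_left hv (hexpk k))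
  -- bound on the initial term
  have hP : ‖Φ (t n) (t n₀) (zbar (t n₀)) (zbar (t n₀) - lam Y)‖ ≤
      KΦ * (Real.exp (-κ * (t n - t n₀)) * ‖zbar (t n₀) - lam Y‖) := by
    calc ‖Φ (t n) (t n₀) (zbar (t n₀)) (zbar (t n₀) - lam Y)‖
        ≤ ‖Φ (t n) (t n₀) (zbar (t n₀))‖ * ‖zbar (t n₀) - lam Y‖ :=
          (Φ (t n) (t n₀) (zbar (t n₀))).le_opNorm _
      _ ≤ KΦ * Real.exp (-κ * (t n - t n₀)) * ‖zbar (t n₀) - lam Y‖ :=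
          mul_le_mul_of_nonneg_right (hΦ _ _ _ (htmono n₀ n hn)) (norm_nonneg _)
      _ = KΦ * (Real.exp (-κ * (t n - t n₀)) * ‖zbar (t n₀) - lam Y‖) := by ring
  -- norm decomposition
  have hnorm : ‖zbar (t n) - lam Y‖ ≤
      ‖Φ (t n) (t n₀) (zbar (t n₀)) (zbar (t n₀) - lam Y)‖ +
      ‖∑ k ∈ Finset.Ico n₀ n,
        ∫ s in t k..t (k + 1), Φ (t n) s (zbar s) (h (zbar (t k)) Y - h (zbar s) Y)‖ +
      ‖∑ k ∈ Finset.Ico n₀ n,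
        ∫ s in t k..t (k + 1),
          (b k / a k) • Φ (t n) s (zbar s) (Dlam (y k) (M2 (k + 1)))‖ +
      ‖∑ k ∈ Finset.Ico n₀ n,
        ∫ s in t k..t (k + 1),
          Φ (t n) s (zbar s) (Dlam (y k) ((b k / a k) • g (x k) (y k)))‖ +
      ‖∑ k ∈ Finset.Ico n₀ n,
        ∫ s in t k..t (k + 1), Φ (t n) s (zbar s) ((a k)⁻¹ • ζ (k + 1))‖ := by
    have e1 : zbar (t n) - lam Y =
        Φ (t n) (t n₀) (zbar (t n₀)) (zbar (t n₀) - lam Y) +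
        (∑ k ∈ Finset.Ico n₀ n,
          ∫ s in t k..t (k + 1), Φ (t n) s (zbar s) (h (zbar (t k)) Y - h (zbar s) Y)) +
        (∑ k ∈ Finset.Ico n₀ n,
          ∫ s in t k..t (k + 1),
            (b k / a k) • Φ (t n) s (zbar s) (Dlam (y k) (M2 (k + 1)))) +
        (∑ k ∈ Finset.Ico n₀ n,
          ∫ s in t k..t (k + 1),
            Φ (t n) s (zbar s) (Dlam (y k) ((b k / a k) • g (x k) (y k)))) +
        (∑ k ∈ Finset.Ico n₀ n,
          ∫ s in t k..t (k + 1), Φ (t n) s (zbar s) ((a k)⁻¹ • ζ (k + 1))) := by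
      rw [hrep n hn]; abel
    rw [e1]
    exact le_trans (norm_add_le _ _) (add_le_add_left (le_trans (norm_add_le _ _)
      (add_le_add_left (le_trans (norm_add_le _ _) (add_le_add_left (norm_add_le _ _) _)) _)) _)
  -- coefficient bounds
  have kc0 : KΦ ≤ K := by rw [hKdef]; linarith only [n1, n2, n3, n4, n5, n6]
  have kc1 : KΦ * Q * ((Lh : ℝ) * Llam * Bg) ≤ K := by
    rw [hKdef]; linarith only [n2, n3, n4, n5, n6, hKΦ]
  have kc2 : KΦ * Q * ((Lh : ℝ) * Llam) ≤ K := by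
    rw [hKdef]; linarith only [n1, n3, n4, n5, n6, hKΦ]
  have kc3 : KΦ * Q * (Llam : ℝ) ≤ K := by
    rw [hKdef]; linarith only [n1, n2, n4, n5, n6, hKΦ]
  have kc4 : KΦ * Q * ((Llam : ℝ) * Bg) ≤ K := by
    rw [hKdef]; linarith only [n1, n2, n3, n5, n6, hKΦ]
  have kc5 : KΦ * Q * (2 * Kζ * Bg ^ 2) ≤ K := by
    rw [hKdef]; linarith only [n1, n2, n3, n4, n6, hKΦ]
  have kc6 : KΦ * Q * (2 * Kζ) ≤ K := by
    rw [hKdef]; linarith only [n1, n2, n3, n4, n5, hKΦ]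
  -- assemble
  have hE0 : 0 ≤ Real.exp (-κ * (t n - t n₀)) * ‖zbar (t n₀) - lam Y‖ :=
    mul_nonneg (Real.exp_pos _).le (norm_nonneg _)
  have mP : KΦ * (Real.exp (-κ * (t n - t n₀)) * ‖zbar (t n₀) - lam Y‖) ≤
      K * (Real.exp (-κ * (t n - t n₀)) * ‖zbar (t n₀) - lam Y‖) :=
    mul_le_mul_of_nonneg_right kc0 hE0
  have m1 : KΦ * Q * ((Lh : ℝ) * Llam * Bg) * T1 ≤ K * T1 :=
    mul_le_mul_of_nonneg_right kc1 hT1n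
  have m2 : KΦ * Q * ((Lh : ℝ) * Llam) * T2 ≤ K * T2 :=
    mul_le_mul_of_nonneg_right kc2 hT2n
  have m6 : KΦ * Q * (Llam : ℝ) * T6 ≤ K * T6 :=
    mul_le_mul_of_nonneg_right kc3 hT6n
  have m7 : KΦ * Q * ((Llam : ℝ) * Bg) * T7 ≤ K * T7 :=
    mul_le_mul_of_nonneg_right kc4 hT7n
  have m8 : KΦ * Q * (2 * Kζ * Bg ^ 2) * T8 ≤ K * T8 :=
    mul_le_mul_of_nonneg_right kc5 hT8n
  have m10 : KΦ * Q * (2 * Kζ) * T10 ≤ K * T10 :=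
    mul_le_mul_of_nonneg_right kc6 hT10n
  have z3 : 0 ≤ K * T3 := mul_nonneg hK0.le hT3n
  have z4 : 0 ≤ K * T4 := mul_nonneg hK0.le hT4n
  have z5 : 0 ≤ K * T5 := mul_nonneg hK0.le hT5n
  have z9 : 0 ≤ K * T9 := mul_nonneg hK0.le hT9n
  linarith only [hnorm, hP, hA, hB, hC, hD, mP, m1, m2, m6, m7, m8, m10, z3, z4, z5, z9]
end
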